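/- arXiv:2209.13938 — 4 statements merged into one kernel-verified Lean document; each statement's English description precedes it below -/
import Mathlib

section
/- Let G be a (2 × 2)-game and set Y₁ = X¹ 1 1 − X¹ 2 1, Y₂ = X¹ 1 2 − X¹ 2 2, Z₁ = X² 1 1 − X² 1 2, Z₂ = X² 2 1 − X² 2 2, and assume Y₁, Y₂, Z₁, Z₂ are all nonzero. Then the correlated equilibrium polytope P_G has maximal dimension 3 (the dimension of the direction of its affine span equals 3) if and only if either (Y₁ > 0 ∧ Y₂ < 0 ∧ Z₁ > 0 ∧ Z₂ < 0) or (Y₁ < 0 ∧ Y₂ > 0 ∧ Z₁ < 0 ∧ Z₂ > 0). -/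
/-!
Write `y₁, y₂, z₁, z₂` for the payoff differences `Y₁, Y₂, Z₁, Z₂`. The polytope lies in the
hyperplane of total mass `1`, so it has dimension `3` exactly when every linear functional that is
constant on it is a multiple of the total mass.

If `y₁` and `y₂` have the same sign, one incentive constraint forces an entry of `p` to vanish. If
the signs of `y₁, y₂` and of `z₁, z₂` are opposite but `y₁ z₁ < 0`, the identity
`z₁ (y₁ p₀₀ + y₂ p₀₁) + z₂ (y₁ p₁₀ + y₂ p₁₁) = y₁ (z₁ p₀₀ + z₂ p₁₀) + y₂ (z₁ p₀₁ + z₂ p₁₁)`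
has a nonpositive left and a nonnegative right side, so all incentive constraints are tight.
Conversely, when `y₁, z₁ > 0 > y₂, z₂`, the two pure equilibria and the two points at which a
pair of incentive constraints is tight are affinely independent.

Transposing `p` exchanges the players, i.e. `y` and `z`, and relabelling the row player's
strategies turns `(y₁, y₂, z₁, z₂)` into `(-y₁, -y₂, z₂, z₁)`; these symmetries reduce the
remaining sign cases to the ones above.
-/

open Module

def CorrelatedEqPolytope (X1 X2 : Fin 2 → Fin 2 → ℝ) :
    Set (Fin 2 → Fin 2 → ℝ) :=
  {p | (∀ j k, 0 ≤ p j k) ∧ (∑ j, ∑ k, p j k = 1) ∧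
    (∀ k l : Fin 2, 0 ≤ ∑ j, (X1 k j - X1 l j) * p k j) ∧
    (∀ k l : Fin 2, 0 ≤ ∑ i, (X2 i k - X2 i l) * p i k)}

section VectorSpan

variable {K V W : Type*} [Field K] [AddCommGroup V] [Module K V] [AddCommGroup W] [Module K W]

theorem vectorSpan_le_ker_of_forall_eq {S : Set V} (f : V →ₗ[K] W) {c : W}
    (hf : ∀ p ∈ S, f p = c) : vectorSpan K S ≤ LinearMap.ker f := by
  rw [vectorSpan_def, Submodule.span_le]
  rintro _ ⟨p, hp, q, hq, rfl⟩
  simp [hf p hp, hf q hq]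

theorem finrank_vectorSpan_preimage_linearEquiv (e : V ≃ₗ[K] W) (T : Set W) :
    finrank K (vectorSpan K (e ⁻¹' T)) = finrank K (vectorSpan K T) := by
  have h := e.symm.toLinearMap.toAffineMap.map_vectorSpan (k := K) (s := T)
  rw [← e.image_symm_eq_preimage, ← e.symm.finrank_map_eq]
  exact congrArg (fun U : Submodule K V => finrank K U) h.symm

variable [FiniteDimensional K V]

theorem finrank_vectorSpan_add_one_le {S : Set V} {f : Dual K V} (hf : f ≠ 0) {c : K}
    (hfS : ∀ p ∈ S, f p = c) : finrank K (vectorSpan K S) + 1 ≤ finrank K V := by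
  rw [← Dual.finrank_ker_add_one_of_ne_zero hf]
  exact Nat.add_le_add_right (Submodule.finrank_mono (vectorSpan_le_ker_of_forall_eq f hfS)) 1

theorem map_eq_zero_of_finrank_vectorSpan_add_one_eq {S : Set V} {f : Dual K V} (hf : f ≠ 0)
    {c : K} (hfS : ∀ p ∈ S, f p = c) (hS : finrank K (vectorSpan K S) + 1 = finrank K V)
    (g : V →ₗ[K] W) {d : W} (hgS : ∀ p ∈ S, g p = d) {v : V} (hv : f v = 0) : g v = 0 := by
  have hspan : vectorSpan K S = LinearMap.ker f :=
    Submodule.eq_of_le_of_finrank_eq (vectorSpan_le_ker_of_forall_eq f hfS)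
      (by have := Dual.finrank_ker_add_one_of_ne_zero hf; omega)
  exact vectorSpan_le_ker_of_forall_eq g hgS (hspan ▸ hv)

theorem le_finrank_vectorSpan_of_linearIndependent {ι : Type*} [Fintype ι] {S : Set V}
    {v : ι → V} (hv : LinearIndependent K v) (hmem : ∀ i, v i ∈ vectorSpan K S) :
    Fintype.card ι ≤ finrank K (vectorSpan K S) :=
  (finrank_span_eq_card hv).symm.le.trans
    (Submodule.finrank_mono (Submodule.span_le.2 (Set.range_subset_iff.2 hmem)))

end VectorSpan

theorem linearIndependent_of_triangular {K V : Type*} [Field K] [AddCommGroup V] [Module K V]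
    {u v w : V} (f g h : Dual K V) (hfu : f u ≠ 0) (hfv : f v = 0) (hfw : f w = 0)
    (hgv : g v ≠ 0) (hgw : g w = 0) (hhw : h w ≠ 0) : LinearIndependent K ![u, v, w] := by
  rw [Fintype.linearIndependent_iff]
  intro a ha
  simp only [Fin.sum_univ_three, Matrix.cons_val_zero, Matrix.cons_val_one, Matrix.cons_val_two,
    Matrix.tail_cons, Matrix.head_cons] at ha
  have hf := congrArg f ha
  have hg := congrArg g ha
  have hh := congrArg h ha
  simp only [map_add, map_smul, smul_eq_mul, map_zero, hfv, hfw, hgw] at hf hg hh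
  have ha₀ : a 0 = 0 := by simpa [hfu] using hf
  have ha₁ : a 1 = 0 := by simpa [ha₀, hgv] using hg
  have ha₂ : a 2 = 0 := by simpa [ha₀, ha₁, hhw] using hh
  intro i
  fin_cases i <;> assumption

section Arrays

variable {ι κ R : Type*}

def entry [Semiring R] (i : ι) (j : κ) : (ι → κ → R) →ₗ[R] R :=
  LinearMap.proj j ∘ₗ LinearMap.proj i

@[simp]
theorem entry_apply [Semiring R] (i : ι) (j : κ) (p : ι → κ → R) : entry i j p = p i j :=
  rfl

def totalMass [Fintype ι] [Fintype κ] [CommSemiring R] : (ι → κ → R) →ₗ[R] R where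
  toFun p := ∑ i, ∑ j, p i j
  map_add' p q := by simp [Finset.sum_add_distrib]
  map_smul' c p := by simp [Finset.mul_sum]

def piCommLinearEquiv (ι κ R : Type*) [Semiring R] : (ι → κ → R) ≃ₗ[R] (κ → ι → R) :=
  { Equiv.piComm fun _ _ => R with
    map_add' := fun _ _ => rfl
    map_smul' := fun _ _ => rfl }

@[simp]
theorem piCommLinearEquiv_apply [Semiring R] (p : ι → κ → R) (j : κ) (i : ι) :
    piCommLinearEquiv ι κ R p j i = p i j :=
  rfl

end Arrays

theorem totalMass_cons (a b c d : ℝ) : totalMass ![![a, b], ![c, d]] = a + b + c + d := by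
  simp [totalMass, Fin.sum_univ_two, add_assoc]

theorem totalMass_ne_zero : (totalMass : (Fin 2 → Fin 2 → ℝ) →ₗ[ℝ] ℝ) ≠ 0 := by
  intro h
  simpa [totalMass_cons] using LinearMap.congr_fun h ![![1, 0], ![0, 0]]

/-- `y₁, y₂` are the row player's gains from row `0` over row `1` against columns `0, 1`, and
`z₁, z₂` the column player's gains from column `0` over column `1` against rows `0, 1`. -/
def ceCone (y₁ y₂ z₁ z₂ : ℝ) : Set (Fin 2 → Fin 2 → ℝ) :=
  {p | 0 ≤ p ∧ 0 ≤ y₁ * p 0 0 + y₂ * p 0 1 ∧ y₁ * p 1 0 + y₂ * p 1 1 ≤ 0 ∧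
    0 ≤ z₁ * p 0 0 + z₂ * p 1 0 ∧ z₁ * p 0 1 + z₂ * p 1 1 ≤ 0}

def cePolytope (y₁ y₂ z₁ z₂ : ℝ) : Set (Fin 2 → Fin 2 → ℝ) :=
  ceCone y₁ y₂ z₁ z₂ ∩ totalMass ⁻¹' {1}

theorem cons_mem_ceCone_iff {y₁ y₂ z₁ z₂ a b c d : ℝ} :
    ![![a, b], ![c, d]] ∈ ceCone y₁ y₂ z₁ z₂ ↔ (0 ≤ a ∧ 0 ≤ b ∧ 0 ≤ c ∧ 0 ≤ d) ∧
      0 ≤ y₁ * a + y₂ * b ∧ y₁ * c + y₂ * d ≤ 0 ∧ 0 ≤ z₁ * a + z₂ * c ∧ z₁ * b + z₂ * d ≤ 0 := by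
  simp [ceCone, Pi.le_def, Fin.forall_fin_two, and_assoc]

theorem cons_mem_cePolytope_iff {y₁ y₂ z₁ z₂ a b c d : ℝ} :
    ![![a, b], ![c, d]] ∈ cePolytope y₁ y₂ z₁ z₂ ↔ ![![a, b], ![c, d]] ∈ ceCone y₁ y₂ z₁ z₂ ∧
      a + b + c + d = 1 := by
  rw [cePolytope, Set.mem_inter_iff, Set.mem_preimage, totalMass_cons, Set.mem_singleton_iff]

theorem correlatedEqPolytope_eq_cePolytope (X1 X2 : Fin 2 → Fin 2 → ℝ) :
    CorrelatedEqPolytope X1 X2 = cePolytope (X1 0 0 - X1 1 0) (X1 0 1 - X1 1 1)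
      (X2 0 0 - X2 0 1) (X2 1 0 - X2 1 1) := by
  ext p
  simp only [CorrelatedEqPolytope, cePolytope, ceCone, totalMass, Set.mem_inter_iff,
    Set.mem_ofPred_eq, Set.mem_preimage, Set.mem_singleton_iff, LinearMap.coe_mk, AddHom.coe_mk,
    Pi.le_def, Pi.zero_apply, Fin.forall_fin_two, Fin.sum_univ_two, sub_self, zero_mul, add_zero,
    le_refl, true_and, and_true]
  constructor
  · rintro ⟨hp, hmass, ⟨h₁, h₂⟩, h₃, h₄⟩
    exact ⟨⟨hp, h₁, by linarith, h₃, by linarith⟩, hmass⟩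
  · rintro ⟨⟨hp, h₁, h₂, h₃, h₄⟩, hmass⟩
    exact ⟨hp, hmass, ⟨h₁, by linarith⟩, h₃, by linarith⟩

section CePolytope

variable {y₁ y₂ z₁ z₂ : ℝ}

theorem smul_mem_ceCone {c : ℝ} {p : Fin 2 → Fin 2 → ℝ} (hc : 0 ≤ c)
    (hp : p ∈ ceCone y₁ y₂ z₁ z₂) : c • p ∈ ceCone y₁ y₂ z₁ z₂ := by
  obtain ⟨hp, h₁, h₂, h₃, h₄⟩ := hp
  refine ⟨smul_nonneg hc hp, ?_, ?_, ?_, ?_⟩ <;> simp only [Pi.smul_apply, smul_eq_mul] <;>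
    nlinarith

theorem inv_smul_mem_cePolytope {p : Fin 2 → Fin 2 → ℝ} (hp : p ∈ ceCone y₁ y₂ z₁ z₂)
    (hmass : 0 < totalMass p) : (totalMass p)⁻¹ • p ∈ cePolytope y₁ y₂ z₁ z₂ :=
  ⟨smul_mem_ceCone (inv_nonneg.2 hmass.le) hp, by simp [hmass.ne']⟩

variable (y₁ y₂ z₁ z₂) in
theorem piComm_preimage_cePolytope :
    piCommLinearEquiv (Fin 2) (Fin 2) ℝ ⁻¹' cePolytope y₁ y₂ z₁ z₂ = cePolytope z₁ z₂ y₁ y₂ := by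
  ext p
  simp only [cePolytope, ceCone, Pi.le_def, Pi.zero_apply, Fin.forall_fin_two, Fin.isValue,
    totalMass, Fin.sum_univ_two, LinearMap.coe_mk, AddHom.coe_mk, Set.preimage_inter,
    Set.preimage_ofPred_eq, piCommLinearEquiv_apply, Set.mem_inter_iff, Set.mem_ofPred_eq,
    Set.mem_preimage, Set.mem_singleton_iff]
  constructor <;> rintro ⟨⟨hp, h₁, h₂, h₃, h₄⟩, hmass⟩ <;>
    refine ⟨⟨by tauto, ?_, ?_, ?_, ?_⟩, ?_⟩ <;> linarith

variable (y₁ y₂ z₁ z₂) in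
theorem swapRows_preimage_cePolytope :
    LinearEquiv.funCongrLeft ℝ (Fin 2 → ℝ) (Equiv.swap 0 1) ⁻¹' cePolytope y₁ y₂ z₁ z₂ =
      cePolytope (-y₁) (-y₂) z₂ z₁ := by
  ext p
  simp only [cePolytope, ceCone, Pi.le_def, Pi.zero_apply, Fin.forall_fin_two, Fin.isValue,
    totalMass, Fin.sum_univ_two, LinearMap.coe_mk, AddHom.coe_mk, Set.preimage_inter,
    Set.preimage_ofPred_eq, LinearEquiv.funCongrLeft_apply, LinearMap.funLeft_apply,
    Equiv.swap_apply_left, Equiv.swap_apply_right, Set.mem_inter_iff, Set.mem_ofPred_eq,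
    Set.mem_preimage, Set.mem_singleton_iff, neg_mul]
  constructor <;> rintro ⟨⟨hp, h₁, h₂, h₃, h₄⟩, hmass⟩ <;>
    refine ⟨⟨by tauto, ?_, ?_, ?_, ?_⟩, ?_⟩ <;> linarith

variable (y₁ y₂ z₁ z₂) in
theorem finrank_vectorSpan_cePolytope_comm :
    finrank ℝ (vectorSpan ℝ (cePolytope z₁ z₂ y₁ y₂)) =
      finrank ℝ (vectorSpan ℝ (cePolytope y₁ y₂ z₁ z₂)) := by
  rw [← piComm_preimage_cePolytope, finrank_vectorSpan_preimage_linearEquiv]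

variable (y₁ y₂ z₁ z₂) in
theorem finrank_vectorSpan_cePolytope_neg_swap :
    finrank ℝ (vectorSpan ℝ (cePolytope (-y₁) (-y₂) z₂ z₁)) =
      finrank ℝ (vectorSpan ℝ (cePolytope y₁ y₂ z₁ z₂)) := by
  rw [← swapRows_preimage_cePolytope, finrank_vectorSpan_preimage_linearEquiv]

variable (y₁ y₂ z₁ z₂) in
theorem finrank_vectorSpan_cePolytope_le_three :
    finrank ℝ (vectorSpan ℝ (cePolytope y₁ y₂ z₁ z₂)) ≤ 3 := by
  have := finrank_vectorSpan_add_one_le totalMass_ne_zero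
    fun p (hp : p ∈ cePolytope y₁ y₂ z₁ z₂) => hp.2
  simp only [finrank_pi_fintype, finrank_self, Finset.sum_const, Finset.card_univ,
    Fintype.card_fin, smul_eq_mul] at this
  omega

theorem apply_eq_zero_of_finrank_vectorSpan_cePolytope_eq_three
    (h : finrank ℝ (vectorSpan ℝ (cePolytope y₁ y₂ z₁ z₂)) = 3)
    (g : Dual ℝ (Fin 2 → Fin 2 → ℝ)) (hg : ∀ p ∈ cePolytope y₁ y₂ z₁ z₂, g p = 0)
    {v : Fin 2 → Fin 2 → ℝ} (hv : totalMass v = 0) : g v = 0 :=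
  map_eq_zero_of_finrank_vectorSpan_add_one_eq totalMass_ne_zero (fun _ hp => hp.2)
    (by simp [h, finrank_pi_fintype]) g hg hv

theorem apply_one_zero_eq_zero_of_mem_ceCone (h₁ : 0 < y₁) (h₂ : 0 ≤ y₂)
    {p : Fin 2 → Fin 2 → ℝ} (hp : p ∈ ceCone y₁ y₂ z₁ z₂) : p 1 0 = 0 := by
  obtain ⟨hp, -, hrow, -, -⟩ := hp
  have := mul_nonneg h₂ (hp 1 1)
  exact le_antisymm (nonpos_of_mul_nonpos_right (by linarith) h₁) (hp 1 0)

theorem incentive_eq_zero_of_mem_ceCone (hy : y₁ * y₂ ≤ 0) (hz : z₁ * z₂ ≤ 0)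
    (hyz : y₁ * z₁ < 0) {p : Fin 2 → Fin 2 → ℝ} (hp : p ∈ ceCone y₁ y₂ z₁ z₂) :
    y₁ * p 0 0 + y₂ * p 0 1 = 0 := by
  obtain ⟨-, h₁, h₂, h₃, h₄⟩ := hp
  have key : z₁ * (y₁ * p 0 0 + y₂ * p 0 1) + z₂ * (y₁ * p 1 0 + y₂ * p 1 1) =
      y₁ * (z₁ * p 0 0 + z₂ * p 1 0) + y₂ * (z₁ * p 0 1 + z₂ * p 1 1) := by ring
  rcases mul_neg_iff.1 hyz with ⟨hy₁, hz₁⟩ | ⟨hy₁, hz₁⟩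
  · have hy₂ : y₂ ≤ 0 := nonpos_of_mul_nonpos_right hy hy₁
    have hz₂ : 0 ≤ z₂ := nonneg_of_mul_nonpos_right hz hz₁
    nlinarith [mul_nonneg hz₂ (neg_nonneg.2 h₂), mul_nonneg hy₁.le h₃,
      mul_nonneg (neg_nonneg.2 hy₂) (neg_nonneg.2 h₄)]
  · have hy₂ : 0 ≤ y₂ := nonneg_of_mul_nonpos_right hy hy₁
    have hz₂ : z₂ ≤ 0 := nonpos_of_mul_nonpos_right hz hz₁
    nlinarith [mul_nonneg (neg_nonneg.2 hz₂) (neg_nonneg.2 h₂), mul_nonneg (neg_nonneg.2 hy₁.le) h₃,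
      mul_nonneg hy₂ (neg_nonneg.2 h₄)]

theorem neg_of_pos_of_finrank_vectorSpan_cePolytope_eq_three
    (h : finrank ℝ (vectorSpan ℝ (cePolytope y₁ y₂ z₁ z₂)) = 3) (h₁ : 0 < y₁) : y₂ < 0 := by
  refine not_le.1 fun h₂ => ?_
  have := apply_eq_zero_of_finrank_vectorSpan_cePolytope_eq_three h (entry 1 0)
    (fun p hp => apply_one_zero_eq_zero_of_mem_ceCone h₁ h₂ hp.1)
    (v := ![![-1, 0], ![1, 0]]) (by norm_num [totalMass_cons])
  simp at this

theorem mul_neg_of_finrank_vectorSpan_cePolytope_eq_three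
    (h : finrank ℝ (vectorSpan ℝ (cePolytope y₁ y₂ z₁ z₂)) = 3) (hy₁ : y₁ ≠ 0) :
    y₁ * y₂ < 0 := by
  rcases hy₁.lt_or_gt with h₁ | h₁
  · rw [← finrank_vectorSpan_cePolytope_neg_swap] at h
    have h₂ := neg_of_pos_of_finrank_vectorSpan_cePolytope_eq_three h (neg_pos.2 h₁)
    exact mul_neg_of_neg_of_pos h₁ (neg_lt_zero.1 h₂)
  · exact mul_neg_of_pos_of_neg h₁ (neg_of_pos_of_finrank_vectorSpan_cePolytope_eq_three h h₁)

theorem mul_pos_of_finrank_vectorSpan_cePolytope_eq_three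
    (h : finrank ℝ (vectorSpan ℝ (cePolytope y₁ y₂ z₁ z₂)) = 3) (hy₁ : y₁ ≠ 0) (hz₁ : z₁ ≠ 0) :
    0 < y₁ * z₁ := by
  have hy := mul_neg_of_finrank_vectorSpan_cePolytope_eq_three h hy₁
  have hz := mul_neg_of_finrank_vectorSpan_cePolytope_eq_three
    (by rwa [finrank_vectorSpan_cePolytope_comm]) hz₁
  refine (mul_ne_zero hy₁ hz₁).symm.lt_of_le (not_lt.1 fun hyz => hy₁ ?_)
  have := apply_eq_zero_of_finrank_vectorSpan_cePolytope_eq_three h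
    (y₁ • entry 0 0 + y₂ • entry 0 1)
    (fun p hp => by simpa using incentive_eq_zero_of_mem_ceCone hy.le hz.le hyz hp.1)
    (v := ![![1, 0], ![-1, 0]]) (by norm_num [totalMass_cons])
  simpa using this

theorem sign_pattern_of_mul (hy₁ : y₁ ≠ 0) (hy : y₁ * y₂ < 0) (hz : z₁ * z₂ < 0)
    (hyz : 0 < y₁ * z₁) :
    (0 < y₁ ∧ y₂ < 0 ∧ 0 < z₁ ∧ z₂ < 0) ∨ (y₁ < 0 ∧ 0 < y₂ ∧ z₁ < 0 ∧ 0 < z₂) := by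
  rcases hy₁.lt_or_gt with h₁ | h₁
  · have h₃ := neg_of_mul_pos_right hyz h₁.le
    exact Or.inr ⟨h₁, pos_of_mul_neg_right hy h₁.le, h₃, pos_of_mul_neg_right hz h₃.le⟩
  · have h₃ := pos_of_mul_pos_right hyz h₁.le
    exact Or.inl ⟨h₁, neg_of_mul_neg_right hy h₁.le, h₃, neg_of_mul_neg_right hz h₃.le⟩

theorem pure_zero_zero_mem_cePolytope (hy₁ : 0 ≤ y₁) (hz₁ : 0 ≤ z₁) :
    ![![1, 0], ![0, 0]] ∈ cePolytope y₁ y₂ z₁ z₂ := by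
  rw [cons_mem_cePolytope_iff, cons_mem_ceCone_iff]
  norm_num [hy₁, hz₁]

theorem pure_one_one_mem_cePolytope (hy₂ : y₂ ≤ 0) (hz₂ : z₂ ≤ 0) :
    ![![0, 0], ![0, 1]] ∈ cePolytope y₁ y₂ z₁ z₂ := by
  rw [cons_mem_cePolytope_iff, cons_mem_ceCone_iff]
  norm_num [hy₂, hz₂]

theorem three_le_finrank_vectorSpan_cePolytope (h₁ : 0 < y₁) (h₂ : y₂ < 0) (h₃ : 0 < z₁)
    (h₄ : z₂ < 0) : 3 ≤ finrank ℝ (vectorSpan ℝ (cePolytope y₁ y₂ z₁ z₂)) := by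
  have hyz := mul_pos h₁ h₃
  have hyz' := mul_pos_of_neg_of_neg h₂ h₄
  have hy₁z₂ := mul_neg_of_pos_of_neg h₁ h₄
  have hy₂z₁ := mul_neg_of_neg_of_pos h₂ h₃
  have he₀₀ := pure_zero_zero_mem_cePolytope (y₂ := y₂) (z₂ := z₂) h₁.le h₃.le
  have he₁₁ := pure_one_one_mem_cePolytope (y₁ := y₁) (z₁ := z₁) h₂.le h₄.le
  have hq₀₁ : ![![y₂ * z₂, -(y₁ * z₂)], ![0, y₁ * z₁]] ∈ ceCone y₁ y₂ z₁ z₂ := by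
    rw [cons_mem_ceCone_iff]
    refine ⟨⟨hyz'.le, by linarith, le_rfl, hyz.le⟩, ?_, ?_, ?_, ?_⟩ <;>
      nlinarith [mul_pos hyz' h₃, mul_pos hyz h₁]
  have hq₁₀ : ![![y₂ * z₂, 0], ![-(y₂ * z₁), y₁ * z₁]] ∈ ceCone y₁ y₂ z₁ z₂ := by
    rw [cons_mem_ceCone_iff]
    refine ⟨⟨hyz'.le, le_rfl, by linarith, hyz.le⟩, ?_, ?_, ?_, ?_⟩ <;>
      nlinarith [mul_pos hyz' h₁, mul_pos hyz h₃]
  have hm₀₁ : 0 < totalMass ![![y₂ * z₂, -(y₁ * z₂)], ![0, y₁ * z₁]] := by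
    rw [totalMass_cons]; linarith
  have hm₁₀ : 0 < totalMass ![![y₂ * z₂, 0], ![-(y₂ * z₁), y₁ * z₁]] := by
    rw [totalMass_cons]; linarith
  set e₀₀ : Fin 2 → Fin 2 → ℝ := ![![1, 0], ![0, 0]]
  set e₁₁ : Fin 2 → Fin 2 → ℝ := ![![0, 0], ![0, 1]]
  set q₀₁ : Fin 2 → Fin 2 → ℝ := ![![y₂ * z₂, -(y₁ * z₂)], ![0, y₁ * z₁]]
  set q₁₀ : Fin 2 → Fin 2 → ℝ := ![![y₂ * z₂, 0], ![-(y₂ * z₁), y₁ * z₁]]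
  have hli : LinearIndependent ℝ ![(totalMass q₀₁)⁻¹ • q₀₁ - e₀₀, (totalMass q₁₀)⁻¹ • q₁₀ - e₀₀,
      e₁₁ - e₀₀] := by
    refine linearIndependent_of_triangular (entry 0 1) (entry 1 0) (entry 1 1) ?_ ?_ ?_ ?_ ?_ ?_ <;>
      simp [e₀₀, e₁₁, q₀₁, q₁₀, hm₀₁.ne', hm₁₀.ne', h₁.ne', h₂.ne, h₃.ne', h₄.ne]
  have hmem : ∀ i, ![(totalMass q₀₁)⁻¹ • q₀₁ - e₀₀, (totalMass q₁₀)⁻¹ • q₁₀ - e₀₀,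
      e₁₁ - e₀₀] i ∈ vectorSpan ℝ (cePolytope y₁ y₂ z₁ z₂) := by
    intro i
    fin_cases i
    · exact vsub_mem_vectorSpan ℝ (inv_smul_mem_cePolytope hq₀₁ hm₀₁) he₀₀
    · exact vsub_mem_vectorSpan ℝ (inv_smul_mem_cePolytope hq₁₀ hm₁₀) he₀₀
    · exact vsub_mem_vectorSpan ℝ he₁₁ he₀₀
  simpa using le_finrank_vectorSpan_of_linearIndependent hli hmem

theorem finrank_vectorSpan_cePolytope_eq_three_iff (hy₁ : y₁ ≠ 0) (hz₁ : z₁ ≠ 0) :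
    finrank ℝ (vectorSpan ℝ (cePolytope y₁ y₂ z₁ z₂)) = 3 ↔
      (0 < y₁ ∧ y₂ < 0 ∧ 0 < z₁ ∧ z₂ < 0) ∨ (y₁ < 0 ∧ 0 < y₂ ∧ z₁ < 0 ∧ 0 < z₂) := by
  constructor
  · intro h
    have h' : finrank ℝ (vectorSpan ℝ (cePolytope z₁ z₂ y₁ y₂)) = 3 := by
      rwa [finrank_vectorSpan_cePolytope_comm]
    exact sign_pattern_of_mul hy₁ (mul_neg_of_finrank_vectorSpan_cePolytope_eq_three h hy₁)
      (mul_neg_of_finrank_vectorSpan_cePolytope_eq_three h' hz₁)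
      (mul_pos_of_finrank_vectorSpan_cePolytope_eq_three h hy₁ hz₁)
  · rintro (⟨h₁, h₂, h₃, h₄⟩ | ⟨h₁, h₂, h₃, h₄⟩)
    · exact (finrank_vectorSpan_cePolytope_le_three _ _ _ _).antisymm
        (three_le_finrank_vectorSpan_cePolytope h₁ h₂ h₃ h₄)
    · rw [← finrank_vectorSpan_cePolytope_neg_swap]
      exact (finrank_vectorSpan_cePolytope_le_three _ _ _ _).antisymm
        (three_le_finrank_vectorSpan_cePolytope (neg_pos.2 h₁) (neg_lt_zero.2 h₂) h₄ h₃)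

end CePolytope

theorem maximal_dim_iff_sign_pattern_2x2_general
    (X1 X2 : Fin 2 → Fin 2 → ℝ)
    (Y₁ Y₂ Z₁ Z₂ : ℝ)
    (hY₁ : Y₁ = X1 0 0 - X1 1 0) (hY₂ : Y₂ = X1 0 1 - X1 1 1)
    (hZ₁ : Z₁ = X2 0 0 - X2 0 1) (hZ₂ : Z₂ = X2 1 0 - X2 1 1)
    (hY₁0 : Y₁ ≠ 0) (hZ₁0 : Z₁ ≠ 0) :
    Module.finrank ℝ (affineSpan ℝ (CorrelatedEqPolytope X1 X2)).direction = 3 ↔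
      ((0 < Y₁ ∧ Y₂ < 0 ∧ 0 < Z₁ ∧ Z₂ < 0) ∨
        (Y₁ < 0 ∧ 0 < Y₂ ∧ Z₁ < 0 ∧ 0 < Z₂)) := by
  rw [direction_affineSpan, correlatedEqPolytope_eq_cePolytope, ← hY₁, ← hY₂, ← hZ₁, ← hZ₂]
  exact finrank_vectorSpan_cePolytope_eq_three_iff hY₁0 hZ₁0

/-- For a generic `(2 × 2)`-game, the correlated equilibrium polytope has maximal
dimension `3` if and only if the payoff differences satisfy one of two sign patterns. -/
theorem maximal_dim_iff_sign_pattern_2x2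
    (X1 X2 : Fin 2 → Fin 2 → ℝ)
    (Y₁ Y₂ Z₁ Z₂ : ℝ)
    (hY₁ : Y₁ = X1 0 0 - X1 1 0) (hY₂ : Y₂ = X1 0 1 - X1 1 1)
    (hZ₁ : Z₁ = X2 0 0 - X2 0 1) (hZ₂ : Z₂ = X2 1 0 - X2 1 1)
    (hY₁0 : Y₁ ≠ 0) (hY₂0 : Y₂ ≠ 0) (hZ₁0 : Z₁ ≠ 0) (hZ₂0 : Z₂ ≠ 0) :
    Module.finrank ℝ (affineSpan ℝ (CorrelatedEqPolytope X1 X2)).direction = 3 ↔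
      ((0 < Y₁ ∧ Y₂ < 0 ∧ 0 < Z₁ ∧ Z₂ < 0) ∨
        (Y₁ < 0 ∧ 0 < Y₂ ∧ Z₁ < 0 ∧ 0 < Z₂)) :=
  maximal_dim_iff_sign_pattern_2x2_general X1 X2 Y₁ Y₂ Z₁ Z₂ hY₁ hY₂ hZ₁ hZ₂ hY₁0 hZ₁0
end

section
/- Consider the Traffic Lights (2 × 2)-game with payoff matrices X¹ = [[−99, 1], [0, 0]] and X² = [[−99, 0], [1, 0]] (rows indexed by player 1's strategies, columns by player 2's). Writing points as p = (p₁₁, p₁₂, p₂₁, p₂₂), the set of extreme points of the correlated equilibrium polytope P_G is exactly { (0, 0, 1, 0), (0, 1, 0, 0), (1/10000, 99/10000, 99/10000, 9801/10000), (0, 1/101, 1/101, 99/101), (1/199, 99/199, 99/199, 0) }. -/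
open Set

theorem convex_correlatedEqPolytope (X1 X2 : Fin 2 → Fin 2 → ℝ) :
    Convex ℝ (CorrelatedEqPolytope X1 X2) := by
  rintro p ⟨hp0, hp1, hp2, hp3⟩ q ⟨hq0, hq1, hq2, hq3⟩ a b ha hb hab
  simp only [CorrelatedEqPolytope, mem_ofPred_eq, Pi.add_apply, Pi.smul_apply, smul_eq_mul,
    mul_add, Finset.sum_add_distrib, mul_left_comm _ a, mul_left_comm _ b, ← Finset.mul_sum]
  refine ⟨fun j k => ?_, by rw [hp1, hq1, mul_one, mul_one, hab], fun k l => ?_, fun k l => ?_⟩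
  · have := hp0 j k; have := hq0 j k; positivity
  · have := hp2 k l; have := hq2 k l; positivity
  · have := hp3 k l; have := hq3 k l; positivity

def trafficLightsPolytope : Set (Fin 2 → Fin 2 → ℝ) :=
  CorrelatedEqPolytope ![![-99, 1], ![0, 0]] ![![-99, 0], ![1, 0]]

theorem mem_trafficLightsPolytope_iff (p : Fin 2 → Fin 2 → ℝ) :
    p ∈ trafficLightsPolytope ↔
      0 ≤ p 0 0 ∧ 0 ≤ p 0 1 ∧ 0 ≤ p 1 0 ∧ 0 ≤ p 1 1 ∧
      p 0 0 + p 0 1 + p 1 0 + p 1 1 = 1 ∧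
      99 * p 0 0 ≤ p 0 1 ∧ p 1 1 ≤ 99 * p 1 0 ∧
      99 * p 0 0 ≤ p 1 0 ∧ p 1 1 ≤ 99 * p 0 1 := by
  simp only [trafficLightsPolytope, CorrelatedEqPolytope, mem_ofPred_eq, Fin.forall_fin_two,
    Fin.sum_univ_two]
  norm_num [and_assoc, add_assoc]

noncomputable def trafficLightsVertex : Fin 5 → Fin 2 → Fin 2 → ℝ :=
  ![![![0, 0], ![1, 0]],
    ![![0, 1], ![0, 0]],
    ![![1/10000, 99/10000], ![99/10000, 9801/10000]],
    ![![0, 1/101], ![1/101, 99/101]],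
    ![![1/199, 99/199], ![99/199, 0]]]

theorem trafficLightsVertex_mem (i : Fin 5) : trafficLightsVertex i ∈ trafficLightsPolytope := by
  rw [mem_trafficLightsPolytope_iff]
  fin_cases i <;> norm_num [trafficLightsVertex]

theorem trafficLightsPolytope_subset_convexHull :
    trafficLightsPolytope ⊆ convexHull ℝ (range trafficLightsVertex) := by
  intro p hp
  obtain ⟨ha, hb, hc, hd, hsum, h1, h2, h3, h4⟩ := (mem_trafficLightsPolytope_iff p).1 hp
  suffices ∃ w : Fin 5 → ℝ, (∀ i, 0 ≤ w i) ∧ ∑ i, w i = 1 ∧ ∑ i, w i • trafficLightsVertex i = p by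
    obtain ⟨w, hw0, hw1, rfl⟩ := this
    exact (convex_convexHull ℝ _).sum_mem (fun i _ => hw0 i) hw1
      (fun i _ => subset_convexHull ℝ _ (mem_range_self i))
  set m := min (p 0 1) (p 1 0)
  have hmb : m ≤ p 0 1 := min_le_left _ _
  have hmc : m ≤ p 1 0 := min_le_right _ _
  have ham : 99 * p 0 0 ≤ m := le_min h1 h3
  have hdm : p 1 1 / 99 ≤ m := le_min (by linarith) (by linarith)
  -- `99 p₁₁ + p₂₂ / 99 = m` holds at the fourth and fifth vertices; where the left side is at most
  -- `m`, the third vertex is not needed.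
  rcases le_total (99 * p 0 0 + p 1 1 / 99) m with hle | hle
  · refine ⟨![p 1 0 - p 1 1 / 99 - 99 * p 0 0, p 0 1 - p 1 1 / 99 - 99 * p 0 0, 0,
      101 * p 1 1 / 99, 199 * p 0 0], ?_, ?_, ?_⟩
    · intro i; fin_cases i <;> simp <;> linarith
    · simp [Fin.sum_univ_five]; linarith
    · ext j k
      fin_cases j <;> fin_cases k <;> simp [Fin.sum_univ_five, trafficLightsVertex] <;> ring
  · refine ⟨![p 1 0 - m, p 0 1 - m, 10000 / 99 * (99 * p 0 0 + p 1 1 / 99 - m),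
      101 * (m - 99 * p 0 0), 199 / 99 * (m - p 1 1 / 99)], ?_, ?_, ?_⟩
    · intro i; fin_cases i <;> simp <;> linarith
    · simp [Fin.sum_univ_five]; linarith
    · ext j k
      fin_cases j <;> fin_cases k <;> simp [Fin.sum_univ_five, trafficLightsVertex] <;> ring

theorem trafficLightsPolytope_eq_convexHull :
    trafficLightsPolytope = convexHull ℝ (range trafficLightsVertex) :=
  trafficLightsPolytope_subset_convexHull.antisymm <|
    convexHull_min (range_subset_iff.2 trafficLightsVertex_mem)
      (convex_correlatedEqPolytope _ _)

def coordFunctional (j k : Fin 2) : StrongDual ℝ (Fin 2 → Fin 2 → ℝ) :=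
  (ContinuousLinearMap.proj k : (Fin 2 → ℝ) →L[ℝ] ℝ).comp (ContinuousLinearMap.proj j)

@[simp]
theorem coordFunctional_apply (j k : Fin 2) (p : Fin 2 → Fin 2 → ℝ) :
    coordFunctional j k p = p j k :=
  rfl

/- Minus the sum of the slacks of the defining inequalities that are tight at the corresponding
vertex, which is the only point of the polytope where they are all tight. -/
noncomputable def trafficLightsExposingFunctional : Fin 5 → StrongDual ℝ (Fin 2 → Fin 2 → ℝ) :=
  ![-(coordFunctional 0 0 + coordFunctional 0 1 + coordFunctional 1 1),
    -(coordFunctional 0 0 + coordFunctional 1 0 + coordFunctional 1 1),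
    -((coordFunctional 0 1 - 99 • coordFunctional 0 0) +
      (coordFunctional 1 0 - 99 • coordFunctional 0 0) +
      (99 • coordFunctional 1 0 - coordFunctional 1 1)),
    -(coordFunctional 0 0 +
      (99 • coordFunctional 1 0 - coordFunctional 1 1) +
      (99 • coordFunctional 0 1 - coordFunctional 1 1)),
    -(coordFunctional 1 1 +
      (coordFunctional 0 1 - 99 • coordFunctional 0 0) +
      (coordFunctional 1 0 - 99 • coordFunctional 0 0))]

theorem trafficLightsVertex_mem_exposedPoints (i : Fin 5) :
    trafficLightsVertex i ∈ exposedPoints ℝ trafficLightsPolytope := by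
  refine ⟨trafficLightsVertex_mem i, trafficLightsExposingFunctional i, fun q hq => ?_⟩
  obtain ⟨ha, hb, hc, hd, hsum, h1, h2, h3, h4⟩ := (mem_trafficLightsPolytope_iff q).1 hq
  fin_cases i <;> simp [trafficLightsExposingFunctional, trafficLightsVertex] <;>
    refine ⟨by linarith, fun h => ?_⟩ <;>
    ext j k <;> fin_cases j <;> fin_cases k <;> simp <;> linarith

theorem extremePoints_trafficLightsPolytope :
    extremePoints ℝ trafficLightsPolytope = range trafficLightsVertex := by
  refine Subset.antisymm ?_ ?_
  · rw [trafficLightsPolytope_eq_convexHull]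
    exact extremePoints_convexHull_subset
  · rintro _ ⟨i, rfl⟩
    exact exposedPoints_subset_extremePoints (trafficLightsVertex_mem_exposedPoints i)

/-- The correlated equilibrium polytope of the Traffic Lights game has exactly the five
listed vertices. -/
theorem trafficLights_extremePoints :
    Set.extremePoints ℝ
        (CorrelatedEqPolytope ![![-99, 1], ![0, 0]] ![![-99, 0], ![1, 0]]) =
      {![![(0 : ℝ), 0], ![1, 0]],
        ![![(0 : ℝ), 1], ![0, 0]],
        ![![(1/10000 : ℝ), 99/10000], ![99/10000, 9801/10000]],
        ![![(0 : ℝ), 1/101], ![1/101, 99/101]],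
        ![![(1/199 : ℝ), 99/199], ![99/199, 0]]} := by
  change extremePoints ℝ trafficLightsPolytope = _
  rw [extremePoints_trafficLightsPolytope]
  simp only [trafficLightsVertex, Matrix.range_cons, Matrix.range_empty, union_empty,
    singleton_union]
end

section
/- Consider the Traffic Lights (2 × 2)-game with payoff matrices X¹ = [[−99, 1], [0, 0]] and X² = [[−99, 0], [1, 0]]. Writing points as p = (p₁₁, p₁₂, p₂₁, p₂₂), a point p of the correlated equilibrium polytope P_G is a Nash equilibrium (i.e. there exist a, b : Fin 2 → ℝ with a, b ≥ 0, ∑ a = ∑ b = 1, and p i j = a i · b j for all i, j) if and only if p ∈ { (0, 1, 0, 0), (0, 0, 1, 0), (1/10000, 99/10000, 99/10000, 9801/10000) }. -/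
/-!
For a product distribution `a ⊗ b` the correlated-equilibrium constraints say exactly that every
pure strategy played with positive probability is a best response to the opponent's mixed
strategy. Writing `a = (1 - x, x)` and `b = (1 - y, y)`, in the Traffic Lights game they read
`(1 - x)(100y - 99) ≥ 0`, `x(99 - 100y) ≥ 0` and symmetrically with `x, y` swapped. If the row
player is pure, the column player must play the other pure strategy; if it mixes, it must be
indifferent, forcing `y = 99/100`, and then the column player mixes too, forcing `x = 99/100`.
-/

open Set

theorem mem_stdSimplex_fin_two_iff {a : Fin 2 → ℝ} :
    a ∈ stdSimplex ℝ (Fin 2) ↔ ∃ x ∈ Icc (0 : ℝ) 1, a = ![1 - x, x] := by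
  constructor
  · intro ha
    exact ⟨a 1, (stdSimplexEquivIcc ℝ ⟨a, ha⟩).2,
      congrArg Subtype.val ((stdSimplexEquivIcc ℝ).symm_apply_apply ⟨a, ha⟩).symm⟩
  · rintro ⟨x, hx, rfl⟩
    exact ((stdSimplexEquivIcc ℝ).symm ⟨x, hx⟩).2

theorem rankOne_mem_correlatedEqPolytope_iff (X1 X2 : Fin 2 → Fin 2 → ℝ) {a b : Fin 2 → ℝ}
    (ha : a ∈ stdSimplex ℝ (Fin 2)) (hb : b ∈ stdSimplex ℝ (Fin 2)) :
    (fun i j => a i * b j) ∈ CorrelatedEqPolytope X1 X2 ↔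
      (∀ k l, 0 ≤ a k * ∑ j, (X1 k j - X1 l j) * b j) ∧
        ∀ k l, 0 ≤ b k * ∑ i, (X2 i k - X2 i l) * a i := by
  have hsum : ∑ i, ∑ j, a i * b j = 1 := by rw [← Finset.sum_mul_sum, ha.2, hb.2, one_mul]
  have hrow (k l) : ∑ j, (X1 k j - X1 l j) * (a k * b j) = a k * ∑ j, (X1 k j - X1 l j) * b j := by
    rw [Finset.mul_sum]; exact Finset.sum_congr rfl fun j _ => by ring
  have hcol (k l) : ∑ i, (X2 i k - X2 i l) * (a i * b k) = b k * ∑ i, (X2 i k - X2 i l) * a i := by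
    rw [Finset.mul_sum]; exact Finset.sum_congr rfl fun i _ => by ring
  simp only [CorrelatedEqPolytope, mem_ofPred_eq, hsum, hrow, hcol, true_and]
  exact and_iff_right fun i j => mul_nonneg (ha.1 i) (hb.1 j)

def mixedProduct (x y : ℝ) : Fin 2 → Fin 2 → ℝ := fun i j => ![1 - x, x] i * ![1 - y, y] j

theorem mixedProduct_eq (x y : ℝ) :
    mixedProduct x y = ![![(1 - x) * (1 - y), (1 - x) * y], ![x * (1 - y), x * y]] := by
  ext i j; fin_cases i <;> fin_cases j <;> rfl

theorem exists_rankOne_iff_eq_mixedProduct {p : Fin 2 → Fin 2 → ℝ} :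
    (∃ a b : Fin 2 → ℝ, (∀ i, 0 ≤ a i) ∧ (∀ j, 0 ≤ b j) ∧
        (∑ i, a i = 1) ∧ (∑ j, b j = 1) ∧ ∀ i j, p i j = a i * b j) ↔
      ∃ x ∈ Icc (0 : ℝ) 1, ∃ y ∈ Icc (0 : ℝ) 1, p = mixedProduct x y := by
  constructor
  · rintro ⟨a, b, ha, hb, hsa, hsb, hp⟩
    obtain ⟨x, hx, rfl⟩ := mem_stdSimplex_fin_two_iff.1 ⟨ha, hsa⟩
    obtain ⟨y, hy, rfl⟩ := mem_stdSimplex_fin_two_iff.1 ⟨hb, hsb⟩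
    exact ⟨x, hx, y, hy, funext₂ hp⟩
  · rintro ⟨x, hx, y, hy, rfl⟩
    obtain ⟨ha, hsa⟩ := mem_stdSimplex_fin_two_iff.2 ⟨x, hx, rfl⟩
    obtain ⟨hb, hsb⟩ := mem_stdSimplex_fin_two_iff.2 ⟨y, hy, rfl⟩
    exact ⟨_, _, ha, hb, hsa, hsb, fun _ _ => rfl⟩

theorem trafficLights_mixedProduct_mem_iff {x y : ℝ} (hx : x ∈ Icc (0 : ℝ) 1)
    (hy : y ∈ Icc (0 : ℝ) 1) :
    mixedProduct x y ∈ CorrelatedEqPolytope ![![-99, 1], ![0, 0]] ![![-99, 0], ![1, 0]] ↔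
      (x, y) ∈ ({(0, 1), (1, 0), (99 / 100, 99 / 100)} : Set (ℝ × ℝ)) := by
  unfold mixedProduct
  rw [rankOne_mem_correlatedEqPolytope_iff _ _ (mem_stdSimplex_fin_two_iff.2 ⟨x, hx, rfl⟩)
    (mem_stdSimplex_fin_two_iff.2 ⟨y, hy, rfl⟩)]
  simp only [Fin.forall_fin_two, Fin.sum_univ_two, Matrix.cons_val_zero, Matrix.cons_val_one,
    Matrix.cons_val_fin_one, sub_self, zero_mul, add_zero, mul_zero, le_refl, true_and, and_true,
    mem_insert_iff, mem_singleton_iff, Prod.mk.injEq]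
  obtain ⟨hx0, hx1⟩ := hx
  obtain ⟨hy0, hy1⟩ := hy
  constructor
  · rintro ⟨⟨hrow0, hrow1⟩, hcol0, hcol1⟩
    rcases hx0.eq_or_lt with rfl | hx0
    · exact Or.inl ⟨rfl, by linarith⟩
    rcases hx1.eq_or_lt with rfl | hx1
    · exact Or.inr (Or.inl ⟨rfl, by linarith⟩)
    have hy : y = 99 / 100 := by nlinarith
    subst hy
    exact Or.inr (Or.inr ⟨by linarith, rfl⟩)
  · rintro (⟨rfl, rfl⟩ | ⟨rfl, rfl⟩ | ⟨rfl, rfl⟩) <;> norm_num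

theorem trafficLights_points_eq_image :
    ({![![(0 : ℝ), 1], ![0, 0]], ![![(0 : ℝ), 0], ![1, 0]],
        ![![(1/10000 : ℝ), 99/10000], ![99/10000, 9801/10000]]} : Set (Fin 2 → Fin 2 → ℝ)) =
      (fun q : ℝ × ℝ => mixedProduct q.1 q.2) '' {(0, 1), (1, 0), (99 / 100, 99 / 100)} := by
  rw [image_insert_eq, image_insert_eq, image_singleton]
  norm_num [mixedProduct_eq]

/-- In the Traffic Lights game, the Nash equilibria (rank-one points of the correlated
equilibrium polytope) are exactly the three listed points. -/
theorem trafficLights_nashEquilibria (p : Fin 2 → Fin 2 → ℝ) :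
    (p ∈ CorrelatedEqPolytope ![![-99, 1], ![0, 0]] ![![-99, 0], ![1, 0]] ∧
      ∃ a b : Fin 2 → ℝ, (∀ i, 0 ≤ a i) ∧ (∀ j, 0 ≤ b j) ∧
        (∑ i, a i = 1) ∧ (∑ j, b j = 1) ∧ ∀ i j, p i j = a i * b j) ↔
      p ∈ ({![![(0 : ℝ), 1], ![0, 0]],
            ![![(0 : ℝ), 0], ![1, 0]],
            ![![(1/10000 : ℝ), 99/10000], ![99/10000, 9801/10000]]} :
        Set (Fin 2 → Fin 2 → ℝ)) := by
  rw [trafficLights_points_eq_image, exists_rankOne_iff_eq_mixedProduct]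
  constructor
  · rintro ⟨hCE, x, hx, y, hy, rfl⟩
    exact ⟨(x, y), (trafficLights_mixedProduct_mem_iff hx hy).1 hCE, rfl⟩
  · rintro ⟨⟨x, y⟩, hxy, rfl⟩
    have hunit : ({(0, 1), (1, 0), (99 / 100, 99 / 100)} : Set (ℝ × ℝ)) ⊆ Icc 0 1 ×ˢ Icc 0 1 := by
      simp only [insert_subset_iff, singleton_subset_iff, mem_prod, mem_Icc]
      norm_num
    obtain ⟨hx, hy⟩ := hunit hxy
    exact ⟨(trafficLights_mixedProduct_mem_iff hx hy).2 hxy, x, hx, y, hy, rfl⟩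
end

section
/- Consider the Hawk–Dove (2 × 2)-game with parameters V, C ∈ ℝ satisfying C > V > 0, with payoff matrices X¹ = [[(V−C)/2, V], [0, V/2]] and X² = [[(V−C)/2, 0], [V, V/2]]. Then the correlated equilibrium polytope P_G has maximal dimension 3 (the dimension of the direction of its affine span equals 3) and has exactly 5 extreme points. -/
open Set

section Convex
variable {E : Type*} [AddCommGroup E] [Module ℝ E]

theorem mem_extremePoints_of_forall_le_imp_eq {S : Set E} {x : E} (f : E →ₗ[ℝ] ℝ) (hx : x ∈ S)
    (hmin : ∀ y ∈ S, f x ≤ f y) (huniq : ∀ y ∈ S, f y ≤ f x → y = x) :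
    x ∈ S.extremePoints ℝ := by
  refine ⟨hx, fun y₁ hy₁ y₂ hy₂ ⟨a, b, ha, hb, hab, hy⟩ => huniq y₁ hy₁ ?_⟩
  have hfx : a * f y₁ + b * f y₂ = f x := by simpa using congrArg f hy
  obtain rfl : b = 1 - a := by linarith
  nlinarith [mul_nonneg hb.le (sub_nonneg.2 (hmin y₂ hy₂))]

theorem mem_extremePoints_convexHull_of_forall_lt {s : Finset E} {x : E} (hx : x ∈ s)
    (f : E →ₗ[ℝ] ℝ) (hf : ∀ y ∈ s, y ≠ x → f x < f y) :
    x ∈ (convexHull ℝ (s : Set E)).extremePoints ℝ := by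
  have hle : ∀ y ∈ s, f x ≤ f y := fun y hy =>
    (eq_or_ne y x).elim (fun h => h ▸ le_rfl) fun h => (hf y hy h).le
  have hmin : ∀ y ∈ convexHull ℝ (s : Set E), f x ≤ f y :=
    convexHull_min hle (convex_halfSpace_ge f.isLinear _)
  refine mem_extremePoints_of_forall_le_imp_eq f (subset_convexHull ℝ _ hx) hmin ?_
  intro y hy hyx
  obtain ⟨w, hw0, hw1, rfl⟩ := Finset.mem_convexHull'.1 hy
  have hsum : ∑ z ∈ s, w z * (f z - f x) = f (∑ z ∈ s, w z • z) - f x := by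
    simp [map_sum, mul_sub, Finset.sum_sub_distrib, ← Finset.sum_mul, hw1]
  have hzero := (Finset.sum_eq_zero_iff_of_nonneg fun z hz =>
    mul_nonneg (hw0 z hz) (sub_nonneg.2 (hle z hz))).1
      (le_antisymm (by linarith) (hsum ▸ sub_nonneg.2 (hmin _ hy)))
  have hw : ∀ z ∈ s, z ≠ x → w z = 0 := fun z hz hzx =>
    (mul_eq_zero.1 (hzero z hz)).resolve_right (sub_pos.2 (hf z hz hzx)).ne'
  rw [Finset.sum_eq_single_of_mem x hx hw] at hw1
  rw [Finset.sum_eq_single_of_mem x hx fun z hz hzx => by rw [hw z hz hzx, zero_smul], hw1,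
    one_smul]

variable {ι : Type*} {v : ι → E}

theorem extremePoints_convexHull_range [Fintype ι]
    (hv : ∀ i, ∃ f : E →ₗ[ℝ] ℝ, ∀ j ≠ i, f (v i) < f (v j)) :
    (convexHull ℝ (range v)).extremePoints ℝ = range v := by
  classical
  refine extremePoints_convexHull_subset.antisymm ?_
  rintro _ ⟨i, rfl⟩
  obtain ⟨f, hf⟩ := hv i
  rw [← Set.image_univ, ← Finset.coe_univ, ← Finset.coe_image]
  refine mem_extremePoints_convexHull_of_forall_lt
    (Finset.mem_image_of_mem v (Finset.mem_univ i)) f fun _ hy hne => ?_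
  obtain ⟨j, -, rfl⟩ := Finset.mem_image.1 hy
  exact hf j fun hji => hne (hji ▸ rfl)

theorem injective_of_forall_exists_lt (hv : ∀ i, ∃ f : E →ₗ[ℝ] ℝ, ∀ j ≠ i, f (v i) < f (v j)) :
    Function.Injective v := by
  intro i j hij
  by_contra hne
  obtain ⟨f, hf⟩ := hv i
  exact (hf j (Ne.symm hne)).ne (congrArg f hij)

end Convex

section WeightedSum
variable {ι κ : Type*} [Fintype ι] [Fintype κ]

def weightedSum (w : ι → κ → ℝ) : (ι → κ → ℝ) →ₗ[ℝ] ℝ where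
  toFun p := ∑ i, ∑ j, w i j * p i j
  map_add' p q := by simp only [Pi.add_apply, mul_add, Finset.sum_add_distrib]
  map_smul' c p := by
    simp only [Pi.smul_apply, smul_eq_mul, Finset.mul_sum, RingHom.id_apply, mul_left_comm]

@[simp]
theorem weightedSum_apply (w p : ι → κ → ℝ) : weightedSum w p = ∑ i, ∑ j, w i j * p i j := rfl

end WeightedSum

theorem finrank_direction_affineSpan_correlatedEqPolytope_le (X1 X2 : Fin 2 → Fin 2 → ℝ) :
    Module.finrank ℝ (affineSpan ℝ (CorrelatedEqPolytope X1 X2)).direction ≤ 3 := by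
  have hker : Module.finrank ℝ (LinearMap.ker (weightedSum (1 : Fin 2 → Fin 2 → ℝ))) + 1 = 4 := by
    rw [Module.Dual.finrank_ker_add_one_of_ne_zero fun h => by
      simpa using LinearMap.congr_fun h 1]
    simp [Module.finrank_pi_fintype]
  have hle : vectorSpan ℝ (CorrelatedEqPolytope X1 X2) ≤ LinearMap.ker (weightedSum 1) := by
    rw [vectorSpan_def, Submodule.span_le]
    rintro _ ⟨p, ⟨-, hp, -⟩, q, ⟨-, hq, -⟩, rfl⟩
    simp only [SetLike.mem_coe, LinearMap.mem_ker, vsub_eq_sub, map_sub, weightedSum_apply,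
      Pi.one_apply, one_mul, hp, hq, sub_self]
  rw [direction_affineSpan]
  have := Submodule.finrank_mono hle
  omega

abbrev hawkDove (V C : ℝ) : Set (Fin 2 → Fin 2 → ℝ) :=
  CorrelatedEqPolytope ![![(V - C)/2, V], ![0, V/2]] ![![(V - C)/2, 0], ![V, V/2]]

section HawkDove

-- The cost is written `C = V + a` with `0 < a`, so that every denominator below is a sum of
-- positive terms.

variable {V a : ℝ}

theorem mem_hawkDove_iff {p : Fin 2 → Fin 2 → ℝ} :
    p ∈ hawkDove V (V + a) ↔
      0 ≤ p 0 0 ∧ 0 ≤ p 0 1 ∧ 0 ≤ p 1 0 ∧ 0 ≤ p 1 1 ∧ p 0 0 + p 0 1 + p 1 0 + p 1 1 = 1 ∧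
      a * p 0 0 ≤ V * p 0 1 ∧ a * p 0 0 ≤ V * p 1 0 ∧
      V * p 1 1 ≤ a * p 1 0 ∧ V * p 1 1 ≤ a * p 0 1 := by
  simp only [CorrelatedEqPolytope, Set.mem_ofPred_eq, Fin.forall_fin_two, Fin.sum_univ_two,
    Fin.isValue, Matrix.cons_val', Matrix.cons_val_zero, Matrix.cons_val_fin_one, sub_self,
    zero_mul, Matrix.cons_val_one, add_zero, le_refl, sub_zero, true_and, zero_sub, neg_mul,
    le_neg_add_iff_add_le, and_true]
  constructor
  · rintro ⟨⟨⟨h00, h01⟩, h10, h11⟩, hs, ⟨c1, c2⟩, c3, c4⟩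
    exact ⟨h00, h01, h10, h11, by linarith, by linarith, by linarith, by linarith, by linarith⟩
  · rintro ⟨h00, h01, h10, h11, hs, c1, c2, c3, c4⟩
    exact ⟨⟨⟨h00, h01⟩, h10, h11⟩, by linarith, ⟨by linarith, by linarith⟩, by linarith,
      by linarith⟩

variable (V a) in
noncomputable def hawkDoveVertex : Fin 5 → Fin 2 → Fin 2 → ℝ :=
  ![![![0, 1], ![0, 0]],
    ![![0, 0], ![1, 0]],
    ![![V / (V + 2 * a), a / (V + 2 * a)], ![a / (V + 2 * a), 0]],
    ![![0, V / (2 * V + a)], ![V / (2 * V + a), a / (2 * V + a)]],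
    ![![V ^ 2 / (V + a) ^ 2, V * a / (V + a) ^ 2], ![V * a / (V + a) ^ 2, a ^ 2 / (V + a) ^ 2]]]

theorem hawkDoveVertex_mem (hV : 0 < V) (ha : 0 < a) (i : Fin 5) :
    hawkDoveVertex V a i ∈ hawkDove V (V + a) := by
  rw [mem_hawkDove_iff]
  fin_cases i <;>
    simp only [hawkDoveVertex, Fin.isValue, Fin.reduceFinMk, Matrix.cons_val', Matrix.cons_val_zero,
      Matrix.cons_val_one, Matrix.cons_val_fin_one, Matrix.cons_val, mul_zero, mul_one, add_zero,
      zero_add, le_refl, zero_le_one, and_true, true_and] <;>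
    and_intros
  all_goals first | positivity | exact le_of_eq (by ring) | (field_simp; ring)

theorem hawkDove_subset_convexHull (hV : 0 < V) (ha : 0 < a) :
    hawkDove V (V + a) ⊆ convexHull ℝ (range (hawkDoveVertex V a)) := by
  intro p hp
  obtain ⟨h00, h01, h10, h11, hs, c1, c2, c3, c4⟩ := mem_hawkDove_iff.1 hp
  rcases le_total (a ^ 2 * p 0 0) (V ^ 2 * p 1 1) with h | h
  · refine mem_convexHull_of_exists_fintype
      ![(a * p 0 1 - V * p 1 1) / a, (a * p 1 0 - V * p 1 1) / a, 0,
        (V ^ 2 * p 1 1 - a ^ 2 * p 0 0) * (2 * V + a) / (V ^ 2 * a), (V + a) ^ 2 * p 0 0 / V ^ 2]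
      _ (fun i => ?_) ?_ mem_range_self ?_
    · fin_cases i
      exacts [div_nonneg (by linarith) ha.le, div_nonneg (by linarith) ha.le, le_rfl,
        div_nonneg (mul_nonneg (by linarith) (by positivity)) (by positivity),
        div_nonneg (mul_nonneg (sq_nonneg _) h00) (sq_nonneg _)]
    · simp only [Fin.sum_univ_five, Matrix.cons_val]
      field_simp
      linear_combination V ^ 2 * a * hs
    · ext j k
      fin_cases j <;> fin_cases k <;>
        simp only [hawkDoveVertex, Fin.sum_univ_five, Finset.sum_apply, Pi.smul_apply, smul_eq_mul,
          Fin.isValue, Fin.reduceFinMk, Matrix.cons_val', Matrix.cons_val_zero, Matrix.cons_val_one,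
          Matrix.cons_val_fin_one, Matrix.cons_val] <;>
        field_simp <;> ring
  · refine mem_convexHull_of_exists_fintype
      ![(V * p 0 1 - a * p 0 0) / V, (V * p 1 0 - a * p 0 0) / V,
        (a ^ 2 * p 0 0 - V ^ 2 * p 1 1) * (V + 2 * a) / (a ^ 2 * V), 0, (V + a) ^ 2 * p 1 1 / a ^ 2]
      _ (fun i => ?_) ?_ mem_range_self ?_
    · fin_cases i
      exacts [div_nonneg (by linarith) hV.le, div_nonneg (by linarith) hV.le,
        div_nonneg (mul_nonneg (by linarith) (by positivity)) (by positivity), le_rfl,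
        div_nonneg (mul_nonneg (sq_nonneg _) h11) (sq_nonneg _)]
    · simp only [Fin.sum_univ_five, Matrix.cons_val]
      field_simp
      linear_combination V * a ^ 2 * hs
    · ext j k
      fin_cases j <;> fin_cases k <;>
        simp only [hawkDoveVertex, Fin.sum_univ_five, Finset.sum_apply, Pi.smul_apply, smul_eq_mul,
          Fin.isValue, Fin.reduceFinMk, Matrix.cons_val', Matrix.cons_val_zero, Matrix.cons_val_one,
          Matrix.cons_val_fin_one, Matrix.cons_val] <;>
        field_simp <;> ring

theorem hawkDove_eq_convexHull (hV : 0 < V) (ha : 0 < a) :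
    hawkDove V (V + a) = convexHull ℝ (range (hawkDoveVertex V a)) :=
  (hawkDove_subset_convexHull hV ha).antisymm <| convexHull_min
    (range_subset_iff.2 (hawkDoveVertex_mem hV ha)) (convex_correlatedEqPolytope _ _)

/- Row `i` is the sum of the constraints of the polytope that are tight at vertex `i`: it vanishes
there and is positive at the other four vertices. -/
variable (V a) in
def hawkDoveSeparator : Fin 5 → Fin 2 → Fin 2 → ℝ :=
  ![![![1, 0], ![1, 1]],
    ![![1, 1], ![0, 1]],
    ![![-2 * a, V], ![V, 1]],
    ![![1, a], ![a, -2 * V]],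
    ![![-2 * a, V + a], ![V + a, -2 * V]]]

theorem weightedSum_hawkDoveSeparator_lt (hV : 0 < V) (ha : 0 < a) {i j : Fin 5} (hji : j ≠ i) :
    weightedSum (hawkDoveSeparator V a i) (hawkDoveVertex V a i) <
      weightedSum (hawkDoveSeparator V a i) (hawkDoveVertex V a j) := by
  fin_cases i <;> fin_cases j <;>
    simp only [hawkDoveSeparator, hawkDoveVertex, weightedSum_apply, Fin.sum_univ_two, Fin.isValue,
      Fin.reduceFinMk, Matrix.cons_val', Matrix.cons_val_zero, Matrix.cons_val_one,
      Matrix.cons_val_fin_one, Matrix.cons_val, ne_eq, not_true_eq_false] at hji ⊢ <;>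
    rw [← sub_pos] <;> field_simp <;> ring_nf <;> positivity

theorem three_le_finrank_direction_hawkDove (hV : 0 < V) (ha : 0 < a) :
    3 ≤ Module.finrank ℝ (affineSpan ℝ (hawkDove V (V + a))).direction := by
  set v := hawkDoveVertex V a
  set u : Fin 3 → Fin 2 → Fin 2 → ℝ := ![v 1 - v 0, v 2 - v 0, v 3 - v 0] with hu
  have hli : LinearIndependent ℝ u := by
    rw [Fintype.linearIndependent_iff]
    intro g hg
    have c00 : g 1 * (V / (V + 2 * a)) = 0 := by
      simpa [hu, v, hawkDoveVertex, Fin.sum_univ_three] using congrFun (congrFun hg 0) 0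
    have c11 : g 2 * (a / (2 * V + a)) = 0 := by
      simpa [hu, v, hawkDoveVertex, Fin.sum_univ_three] using congrFun (congrFun hg 1) 1
    have c10 : g 0 + g 1 * (a / (V + 2 * a)) + g 2 * (V / (2 * V + a)) = 0 := by
      simpa [hu, v, hawkDoveVertex, Fin.sum_univ_three] using congrFun (congrFun hg 1) 0
    have hg1 : g 1 = 0 := (mul_eq_zero.1 c00).resolve_right (by positivity)
    have hg2 : g 2 = 0 := (mul_eq_zero.1 c11).resolve_right (by positivity)
    intro i
    fin_cases i
    exacts [by simpa [hg1, hg2] using c10, hg1, hg2]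
  have hsub : Submodule.span ℝ (range u) ≤ (affineSpan ℝ (hawkDove V (V + a))).direction := by
    rw [direction_affineSpan, Submodule.span_le]
    rintro _ ⟨i, rfl⟩
    fin_cases i <;>
      exact vsub_mem_vectorSpan ℝ (hawkDoveVertex_mem hV ha _) (hawkDoveVertex_mem hV ha 0)
  simpa [finrank_span_eq_card hli] using Submodule.finrank_mono hsub

end HawkDove

/-- For the Hawk–Dove game with `C > V > 0`, the correlated equilibrium polytope has
maximal dimension `3` and exactly `5` vertices. -/
theorem hawkDove_maximal_dim_and_five_vertices
    (V C : ℝ) (hV : 0 < V) (hC : V < C) :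
    Module.finrank ℝ
        (affineSpan ℝ (CorrelatedEqPolytope
          ![![(V - C)/2, V], ![0, V/2]] ![![(V - C)/2, 0], ![V, V/2]])).direction = 3 ∧
      (Set.extremePoints ℝ (CorrelatedEqPolytope
          ![![(V - C)/2, V], ![0, V/2]] ![![(V - C)/2, 0], ![V, V/2]])).ncard = 5 := by
  obtain ⟨a, ha, rfl⟩ : ∃ a, 0 < a ∧ C = V + a := ⟨C - V, sub_pos.2 hC, by ring⟩
  have hsep (i : Fin 5) : ∃ f : (Fin 2 → Fin 2 → ℝ) →ₗ[ℝ] ℝ,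
      ∀ j ≠ i, f (hawkDoveVertex V a i) < f (hawkDoveVertex V a j) :=
    ⟨_, fun _ => weightedSum_hawkDoveSeparator_lt hV ha⟩
  refine ⟨(finrank_direction_affineSpan_correlatedEqPolytope_le _ _).antisymm
    (three_le_finrank_direction_hawkDove hV ha), ?_⟩
  change (extremePoints ℝ (hawkDove V (V + a))).ncard = 5
  rw [hawkDove_eq_convexHull hV ha, extremePoints_convexHull_range hsep,
    ncard_range_of_injective (injective_of_forall_exists_lt hsep), Nat.card_eq_fintype_card,
    Fintype.card_fin]
end
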